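/- arXiv:math/0511054 — 3 statements merged into one kernel-verified Lean document; each statement's English description precedes it below -/
import Mathlib

section
/- For ℓ ≥ 1 a natural number and any unit vector (τ, ξ) ∈ ℝ² (τ² + ξ² = 1), the Lebesgue measure of the set {v ∈ [-M, M] : |τ + v^ℓ ξ| ≤ δ} is bounded by C·δ^{1/ℓ} for a constant C depending only on ℓ and M, uniformly in (τ, ξ) and 0 < δ ≤ 1. -/
/-!
If `|ξ|` is small compared with `M^(-ℓ)`, then `|τ|` is close to `1` and `|τ + v^ℓ ξ| ≥ 1/2` on
`[-M, M]`, so the set is empty unless `δ ≥ 1/2`, where the trivial bound `2M` suffices. Otherwise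
the set lies in the preimage under `v ↦ v^ℓ` of an interval of length `2δ/|ξ| ≲ δ`. On each
half-line `|v - w|^ℓ ≤ |v^ℓ - w^ℓ|`, so each half of that preimage has diameter at most
`(2δ/|ξ|)^(1/ℓ)`.
-/

open MeasureTheory Set

section PowerDifference

variable {α : Type*} [CommRing α] [LinearOrder α] [IsStrictOrderedRing α] {a b : α} {n : ℕ}

theorem abs_sub_pow_le_abs_pow_sub_pow (ha : 0 ≤ a) (hb : 0 ≤ b) (hn : n ≠ 0) :
    |a - b| ^ n ≤ |a ^ n - b ^ n| := by
  wlog hab : b ≤ a generalizing a b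
  · rw [abs_sub_comm, abs_sub_comm (a ^ n)]
    exact this hb ha (le_of_not_ge hab)
  have hpow : b ^ n ≤ a ^ n := pow_le_pow_left₀ hb hab n
  rw [abs_of_nonneg (sub_nonneg.2 hab), abs_of_nonneg (sub_nonneg.2 hpow)]
  have := pow_add_pow_le (sub_nonneg.2 hab) hb hn
  rw [sub_add_cancel] at this
  linarith

theorem abs_sub_pow_le_abs_pow_sub_pow_of_mul_nonneg (hab : 0 ≤ a * b) (hn : n ≠ 0) :
    |a - b| ^ n ≤ |a ^ n - b ^ n| := by
  rcases mul_nonneg_iff.1 hab with ⟨ha, hb⟩ | ⟨ha, hb⟩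
  · exact abs_sub_pow_le_abs_pow_sub_pow ha hb hn
  · have := abs_sub_pow_le_abs_pow_sub_pow (neg_nonneg.2 ha) (neg_nonneg.2 hb) hn
    rwa [neg_sub_neg, neg_pow a, neg_pow b, ← mul_sub, abs_mul, abs_pow, abs_neg,
      abs_one, one_pow, one_mul, abs_sub_comm] at this

end PowerDifference

theorem Real.volume_le_ofReal_of_forall_abs_sub_le {s : Set ℝ} {d : ℝ}
    (h : ∀ x ∈ s, ∀ y ∈ s, |x - y| ≤ d) : volume s ≤ ENNReal.ofReal d :=
  (Real.volume_le_diam s).trans (Metric.ediam_le_of_forall_dist_le h)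

theorem Real.volume_setOf_abs_pow_sub_le {n : ℕ} (hn : n ≠ 0) (a : ℝ) {r : ℝ} (hr : 0 ≤ r) :
    volume {v : ℝ | |v ^ n - a| ≤ r} ≤ ENNReal.ofReal (2 * (2 * r) ^ (n⁻¹ : ℝ)) := by
  set T := {v : ℝ | |v ^ n - a| ≤ r}
  have hclose : ∀ v ∈ T, ∀ w ∈ T, 0 ≤ v * w → |v - w| ≤ (2 * r) ^ (n⁻¹ : ℝ) := by
    intro v (hv : |v ^ n - a| ≤ r) w (hw : |w ^ n - a| ≤ r) hvw
    have hpow : |v - w| ^ n ≤ 2 * r := calc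
      |v - w| ^ n ≤ |v ^ n - w ^ n| := abs_sub_pow_le_abs_pow_sub_pow_of_mul_nonneg hvw hn
      _ ≤ |v ^ n - a| + |a - w ^ n| := abs_sub_le _ _ _
      _ ≤ 2 * r := by rw [abs_sub_comm a]; linarith
    calc |v - w| = (|v - w| ^ n) ^ (n⁻¹ : ℝ) := (Real.pow_rpow_inv_natCast (abs_nonneg _) hn).symm
      _ ≤ (2 * r) ^ (n⁻¹ : ℝ) := Real.rpow_le_rpow (by positivity) hpow (by positivity)
  have hhalf : ∀ s ⊆ T, (∀ v ∈ s, ∀ w ∈ s, 0 ≤ v * w) →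
      volume s ≤ ENNReal.ofReal ((2 * r) ^ (n⁻¹ : ℝ)) := fun s hsT hs =>
    Real.volume_le_ofReal_of_forall_abs_sub_le fun v hv w hw =>
      hclose v (hsT hv) w (hsT hw) (hs v hv w hw)
  calc volume T ≤ volume (T ∩ Ici 0 ∪ T ∩ Iic 0) :=
        measure_mono fun v hv => (le_total 0 v).imp (⟨hv, ·⟩) (⟨hv, ·⟩)
    _ ≤ volume (T ∩ Ici 0) + volume (T ∩ Iic 0) := measure_union_le _ _
    _ ≤ ENNReal.ofReal ((2 * r) ^ (n⁻¹ : ℝ)) + ENNReal.ofReal ((2 * r) ^ (n⁻¹ : ℝ)) :=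
        add_le_add
          (hhalf _ inter_subset_left fun _ hv _ hw => mul_nonneg hv.2 hw.2)
          (hhalf _ inter_subset_left fun _ hv _ hw => mul_nonneg_of_nonpos_of_nonpos hv.2 hw.2)
    _ = ENNReal.ofReal (2 * (2 * r) ^ (n⁻¹ : ℝ)) := by
        rw [← ENNReal.ofReal_add (by positivity) (by positivity), ← two_mul]

theorem Real.volume_setOf_abs_add_pow_mul_le {n : ℕ} (hn : n ≠ 0) {ξ : ℝ} (hξ : ξ ≠ 0)
    (τ : ℝ) {δ : ℝ} (hδ : 0 ≤ δ) :
    volume {v : ℝ | |τ + v ^ n * ξ| ≤ δ} ≤ ENNReal.ofReal (2 * (2 * δ / |ξ|) ^ (n⁻¹ : ℝ)) := by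
  have hset : {v : ℝ | |τ + v ^ n * ξ| ≤ δ} = {v : ℝ | |v ^ n - -τ / ξ| ≤ δ / |ξ|} := by
    ext v
    have : τ + v ^ n * ξ = ξ * (v ^ n - -τ / ξ) := by field_simp; ring
    rw [mem_ofPred_eq, mem_ofPred_eq, this, abs_mul, le_div_iff₀' (abs_pos.2 hξ)]
  rw [hset, mul_div_assoc]
  exact Real.volume_setOf_abs_pow_sub_le hn _ (by positivity)

theorem half_le_abs_add_pow_mul {n : ℕ} {M τ ξ v : ℝ} (hτξ : τ ^ 2 + ξ ^ 2 = 1)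
    (hξ : 4 * (1 + M ^ n) * |ξ| ≤ 1) (hv : |v| ≤ M) : 1 / 2 ≤ |τ + v ^ n * ξ| := by
  have hMn : 0 ≤ M ^ n := pow_nonneg ((abs_nonneg v).trans hv) n
  have hξ4 : |ξ| ≤ 1 / 4 := by nlinarith [abs_nonneg ξ]
  have hτ : 3 / 4 ≤ |τ| := by nlinarith [sq_abs τ, sq_abs ξ, abs_nonneg ξ, abs_nonneg τ]
  have hvξ : |v ^ n * ξ| ≤ 1 / 4 := by
    rw [abs_mul, abs_pow]
    nlinarith [pow_le_pow_left₀ (abs_nonneg v) hv n, abs_nonneg ξ]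
  calc 1 / 2 ≤ |τ| - |v ^ n * ξ| := by linarith
    _ ≤ |τ + v ^ n * ξ| := by simpa using abs_sub_abs_le_abs_sub τ (-(v ^ n * ξ))

theorem nondegeneracy_power_flux (ℓ : ℕ) (hℓ : 1 ≤ ℓ) (M : ℝ) (hM : 0 < M) :
    ∃ C : ℝ, 0 < C ∧ ∀ τ ξ δ : ℝ, τ ^ 2 + ξ ^ 2 = 1 → 0 < δ → δ ≤ 1 →
      volume {v : ℝ | v ∈ Set.Icc (-M) M ∧ |τ + v ^ ℓ * ξ| ≤ δ}
        ≤ ENNReal.ofReal (C * δ ^ (1 / (ℓ : ℝ))) := by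
  have hℓ0 : ℓ ≠ 0 := Nat.one_le_iff_ne_zero.1 hℓ
  set K : ℝ := 8 * (1 + M ^ ℓ)
  refine ⟨(2 * M + 2) * K ^ (1 / (ℓ : ℝ)), by positivity, fun τ ξ δ hτξ hδ _ => ?_⟩
  rw [mul_assoc, ← Real.mul_rpow (by positivity) hδ.le, one_div]
  by_cases hξ : 4 * (1 + M ^ ℓ) * |ξ| ≤ 1
  · obtain h | ⟨v, hvM, hvδ⟩ :=
      eq_empty_or_nonempty {v : ℝ | v ∈ Icc (-M) M ∧ |τ + v ^ ℓ * ξ| ≤ δ}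
    · rw [h, measure_empty]
      exact zero_le
    have hδ2 : 1 / 2 ≤ δ := (half_le_abs_add_pow_mul hτξ hξ (abs_le.2 hvM)).trans hvδ
    have hroot : 1 ≤ (K * δ) ^ (ℓ⁻¹ : ℝ) :=
      Real.one_le_rpow (by nlinarith [pow_pos hM ℓ]) (by positivity)
    calc _ ≤ volume (Icc (-M) M) := measure_mono fun _ h => h.1
      _ = ENNReal.ofReal (2 * M) := by rw [Real.volume_Icc, sub_neg_eq_add, two_mul]
      _ ≤ _ := ENNReal.ofReal_le_ofReal (by nlinarith)
  · have hξ0 : ξ ≠ 0 := by rintro rfl; simp at hξ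
    have hratio : 2 * δ / |ξ| ≤ K * δ := by
      rw [div_le_iff₀ (abs_pos.2 hξ0)]; nlinarith
    calc _ ≤ volume {v : ℝ | |τ + v ^ ℓ * ξ| ≤ δ} := measure_mono fun _ h => h.2
      _ ≤ _ := Real.volume_setOf_abs_add_pow_mul_le hℓ0 hξ0 τ hδ.le
      _ ≤ _ := ENNReal.ofReal_le_ofReal <| by gcongr; linarith
end

section
/- Let T be a map with T(0) = 0 that is Lipschitz on a normed space X with constant L, and maps a subspace Y₁ ⊆ X boundedly into a normed space Y₂ with ‖T y‖_{Y₂} ≤ B ‖y‖_{Y₁}. Then the K-functionals satisfy K(Tx, t; X, Y₂) ≤ L · K(x, t B / L; X, Y₁) for all x ∈ Y₁ + X and t > 0, where K(x, t; X, Y) := inf{‖x₀‖_X + t ‖x₁‖_Y : x = x₀ + x₁}. -/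
/-! Every decomposition `x = x₀ + x₁` with `x₁ ∈ Y₁` induces the decomposition
`T x = (T x - T x₁) + T x₁` with `T x₁ ∈ Y₂`, whose `X`-part is at most `L ‖x₀‖` by the
Lipschitz bound and whose `Y₂`-part is at most `B nY₁ x₁`. -/

open Set

variable {X : Type*} [NormedAddCommGroup X]

/-- The Peetre K-functional of `x` at parameter `t`, relative to the ambient space `X`
and a subset `Y ⊆ X` endowed with a norm functional `nY`. -/
noncomputable def Kfun (Y : Set X) (nY : X → ℝ) (x : X) (t : ℝ) : ℝ :=
  sInf {r : ℝ | ∃ x₀ x₁ : X, x = x₀ + x₁ ∧ x₁ ∈ Y ∧ r = ‖x₀‖ + t * nY x₁}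

section Kfun

variable {Y : Set X} {nY : X → ℝ}

theorem Kfun_le (hnY : ∀ y, 0 ≤ nY y) {t : ℝ} (ht : 0 ≤ t) (x₀ : X) {x₁ : X} (hx₁ : x₁ ∈ Y) :
    Kfun Y nY (x₀ + x₁) t ≤ ‖x₀‖ + t * nY x₁ := by
  refine csInf_le ⟨0, ?_⟩ ⟨x₀, x₁, rfl, hx₁, rfl⟩
  rintro r ⟨a, b, -, -, rfl⟩
  exact add_nonneg (norm_nonneg a) (mul_nonneg ht (hnY b))

theorem le_Kfun (hY : Y.Nonempty) {x : X} {t c : ℝ}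
    (h : ∀ x₀ x₁, x₁ ∈ Y → x = x₀ + x₁ → c ≤ ‖x₀‖ + t * nY x₁) : c ≤ Kfun Y nY x t := by
  obtain ⟨y, hy⟩ := hY
  refine le_csInf ⟨_, x - y, y, (sub_add_cancel x y).symm, hy, rfl⟩ ?_
  rintro r ⟨x₀, x₁, hx, hx₁, rfl⟩
  exact h x₀ x₁ hx₁ hx

end Kfun

theorem nonlinear_interpolation_K_general (Y₁ Y₂ : Set X) (nY₁ nY₂ : X → ℝ)
    (h0₁ : (0 : X) ∈ Y₁)
    (hn₂ : ∀ x, 0 ≤ nY₂ x)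
    (T : X → X)
    (L B : ℝ) (hL : 0 < L)
    (hLip : ∀ x x' : X, ‖T x - T x'‖ ≤ L * ‖x - x'‖)
    (hTY : ∀ y ∈ Y₁, T y ∈ Y₂ ∧ nY₂ (T y) ≤ B * nY₁ y) :
    ∀ (x : X) (t : ℝ), 0 < t →
      Kfun Y₂ nY₂ (T x) t ≤ L * Kfun Y₁ nY₁ x (t * B / L) := by
  intro x t ht
  rw [mul_comm, ← div_le_iff₀ hL]
  refine le_Kfun ⟨0, h0₁⟩ fun x₀ x₁ hx₁ hx => ?_
  rw [div_le_iff₀ hL]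
  obtain ⟨hTx₁, hnTx₁⟩ := hTY x₁ hx₁
  calc Kfun Y₂ nY₂ (T x) t
      = Kfun Y₂ nY₂ ((T x - T x₁) + T x₁) t := by rw [sub_add_cancel]
    _ ≤ ‖T x - T x₁‖ + t * nY₂ (T x₁) := Kfun_le hn₂ ht.le _ hTx₁
    _ ≤ L * ‖x₀‖ + t * (B * nY₁ x₁) := by
        gcongr
        simpa [hx] using hLip x x₁
    _ = (‖x₀‖ + t * B / L * nY₁ x₁) * L := by field_simp

/-- Nonlinear interpolation lemma of J.-L. Lions: if `T` is Lipschitz on `X` with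
constant `L`, `T 0 = 0`, and maps `Y₁` into `Y₂` with bound `B`, then
`K(Tx, t; X, Y₂) ≤ L · K(x, tB/L; X, Y₁)`. -/
theorem nonlinear_interpolation_K (Y₁ Y₂ : Set X) (nY₁ nY₂ : X → ℝ)
    (h0₁ : (0 : X) ∈ Y₁) (h0₂ : (0 : X) ∈ Y₂)
    (hn₁ : ∀ x, 0 ≤ nY₁ x) (hn₂ : ∀ x, 0 ≤ nY₂ x)
    (T : X → X) (hT0 : T 0 = 0)
    (L B : ℝ) (hL : 0 < L) (hB : 0 < B)
    (hLip : ∀ x x' : X, ‖T x - T x'‖ ≤ L * ‖x - x'‖)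
    (hTY : ∀ y ∈ Y₁, T y ∈ Y₂ ∧ nY₂ (T y) ≤ B * nY₁ y) :
    ∀ (x : X) (t : ℝ), 0 < t →
      Kfun Y₂ nY₂ (T x) t ≤ L * Kfun Y₁ nY₁ x (t * B / L) :=
  nonlinear_interpolation_K_general Y₁ Y₂ nY₁ nY₂ h0₁ hn₂ T L B hL hLip hTY
end

section
/- Let ℓ ≠ m be natural numbers ≥ 1 and M > 0. Then there exists C and α = min(1/ℓ, 1/m) such that for every (τ, ξ₁, ξ₂) with τ² + ξ₁² + ξ₂² = 1 and every δ ∈ (0,1], the measure of {v ∈ [-M,M] : |τ + v^ℓ ξ₁ + v^m ξ₂| ≤ δ} is at most C δ^α. -/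
/-!
On the unit sphere the polynomial `p = τ + ξ₁ X^ℓ + ξ₂ X^m` is nonzero of degree at most
`n = max ℓ m`, so it cannot vanish at `n + 1` given points of `[-M, M]`; by compactness,
`|p(v₀)| ≥ c > 0` at one of them. Factoring `p` over `ℂ`,
`|p(v)| / |p(v₀)| = ∏ |v - r| / |v₀ - r|` over the roots `r`. Put `t = (δ / c)^(1/n)`.
If `|p(v)| ≤ δ` and `t < 1/2`, some factor is at most `2t / (1 + 2t)`, which forces
`|v - r| ≤ 4Mt`. So the sublevel set is covered by at most `n` intervals of length `8Mt`.
-/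

open MeasureTheory Polynomial Set

theorem IsCompact.exists_pos_forall_exists_le_abs {X ι : Type*} [TopologicalSpace X] [Fintype ι]
    {K : Set X} (hK : IsCompact K) {f : ι → X → ℝ} (hf : ∀ i, Continuous (f i))
    (hK0 : ∀ x ∈ K, ∃ i, f i x ≠ 0) : ∃ c > 0, ∀ x ∈ K, ∃ i, c ≤ |f i x| := by
  rcases isEmpty_or_nonempty ι with _ | _
  · exact ⟨1, one_pos, fun x hx => (hK0 x hx).elim fun i _ => isEmptyElim i⟩
  obtain ⟨c, hc, hcK⟩ := hK.exists_forall_le' (f := fun x => ∑ i, |f i x|) (a := 0)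
    (by fun_prop) fun x hx => by
      obtain ⟨i, hi⟩ := hK0 x hx
      exact (abs_pos.2 hi).trans_le
        (Finset.single_le_sum (fun j _ => abs_nonneg (f j x)) (Finset.mem_univ i))
  refine ⟨c / Fintype.card ι, by positivity, fun x hx => ?_⟩
  have hcard : (Fintype.card ι : ℝ) ≠ 0 := Nat.cast_ne_zero.2 Fintype.card_ne_zero
  obtain ⟨i, -, hi⟩ := Finset.exists_le_of_sum_le Finset.univ_nonempty
    (f := fun _ => c / Fintype.card ι) (g := fun i => |f i x|)
    (by simpa [mul_div_cancel₀ _ hcard] using hcK x hx)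
  exact ⟨i, hi⟩

theorem Polynomial.norm_eval_eq_mul_prod_roots (q : ℂ[X]) (z : ℂ) :
    ‖q.eval z‖ = ‖q.leadingCoeff‖ * (q.roots.map fun r => ‖z - r‖).prod := by
  rw [(IsAlgClosed.splits q).eval_eq_prod_roots, norm_mul]
  congr 1
  simpa [Multiset.map_map] using
    (Multiset.prod_hom (q.roots.map (z - ·)) (normHom : ℂ →*₀ ℝ)).symm

theorem Polynomial.pow_natDegree_mul_norm_eval_le {q : ℂ[X]} {z w : ℂ} {θ : ℝ} (hθ : 0 ≤ θ)
    (h : ∀ r ∈ q.roots, θ * ‖w - r‖ ≤ ‖z - r‖) :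
    θ ^ q.natDegree * ‖q.eval w‖ ≤ ‖q.eval z‖ := by
  rw [norm_eval_eq_mul_prod_roots, norm_eval_eq_mul_prod_roots,
    (IsAlgClosed.splits q).natDegree_eq_card_roots, mul_left_comm, ← Multiset.prod_replicate,
    ← Multiset.map_const', ← Multiset.prod_map_mul]
  gcongr ‖_‖ * ?_
  exact Multiset.prod_map_le_prod_map₀ _ _ (fun r _ => by positivity) h

theorem Polynomial.norm_eval_map_ofReal (p : ℝ[X]) (x : ℝ) :
    ‖(p.map (algebraMap ℝ ℂ)).eval (x : ℂ)‖ = |p.eval x| := by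
  rw [← Complex.coe_algebraMap, eval_map_algebraMap, aeval_algebraMap_apply, coe_aeval_eq_eval,
    Complex.coe_algebraMap, Complex.norm_real, Real.norm_eq_abs]

theorem Polynomial.exists_root_near_of_abs_eval_le {p : ℝ[X]} {n : ℕ} (hn : n ≠ 0)
    (hp : p.natDegree ≤ n) {v₀ v L t δ : ℝ} (hv : |v - v₀| ≤ L) (ht₀ : 0 < t) (ht : t < 1 / 2)
    (hp₀ : p.eval v₀ ≠ 0) (hδ : δ ≤ t ^ n * |p.eval v₀|) (hpv : |p.eval v| ≤ δ) :
    ∃ r ∈ (p.map (algebraMap ℝ ℂ)).roots, |v - r.re| < 2 * L * t := by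
  by_contra! hfar
  set θ := 2 * t / (1 + 2 * t)
  have hθ₀ : 0 ≤ θ := by positivity
  have htθ : t < θ := by rw [lt_div_iff₀ (by positivity)]; nlinarith
  have hθ₁ : θ ≤ 1 := div_le_one_of_le₀ (by linarith) (by positivity)
  -- A root at distance `d ≥ 2Lt` from `v` is at distance at most `L + d ≤ d / θ` from `v₀`.
  have hratio : ∀ r ∈ (p.map (algebraMap ℝ ℂ)).roots, θ * ‖(v₀ : ℂ) - r‖ ≤ ‖(v : ℂ) - r‖ := by
    intro r hr
    have hre : 2 * L * t ≤ ‖(v : ℂ) - r‖ :=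
      (hfar r hr).trans (by simpa using Complex.abs_re_le_norm ((v : ℂ) - r))
    have htri : ‖(v₀ : ℂ) - r‖ ≤ L + ‖(v : ℂ) - r‖ := by
      calc ‖(v₀ : ℂ) - r‖ ≤ ‖(v₀ : ℂ) - v‖ + ‖(v : ℂ) - r‖ :=
            norm_sub_le_norm_sub_add_norm_sub _ _ _
        _ ≤ L + ‖(v : ℂ) - r‖ := by
          rw [← Complex.ofReal_sub, Complex.norm_real, Real.norm_eq_abs, abs_sub_comm]
          gcongr
    calc θ * ‖(v₀ : ℂ) - r‖ ≤ θ * (L + ‖(v : ℂ) - r‖) := by gcongr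
      _ ≤ ‖(v : ℂ) - r‖ := by
        rw [div_mul_eq_mul_div, div_le_iff₀ (by positivity)]; nlinarith
  have hlow := pow_natDegree_mul_norm_eval_le hθ₀ hratio
  rw [norm_eval_map_ofReal, norm_eval_map_ofReal, natDegree_map] at hlow
  have hcontra := calc |p.eval v| ≤ δ := hpv
    _ ≤ t ^ n * |p.eval v₀| := hδ
    _ < θ ^ n * |p.eval v₀| := by gcongr
    _ ≤ θ ^ p.natDegree * |p.eval v₀| :=
      mul_le_mul_of_nonneg_right (pow_le_pow_of_le_one hθ₀ hθ₁ hp) (abs_nonneg _)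
    _ ≤ |p.eval v| := hlow
  exact lt_irrefl _ hcontra

theorem Real.volume_biUnion_ball_le {ι : Type*} (s : Finset ι) (x : ι → ℝ) (ρ : ℝ) :
    volume (⋃ i ∈ s, Metric.ball (x i) ρ) ≤ s.card * ENNReal.ofReal (2 * ρ) := by
  calc volume (⋃ i ∈ s, Metric.ball (x i) ρ) ≤ ∑ i ∈ s, volume (Metric.ball (x i) ρ) :=
        measure_biUnion_finset_le _ _
    _ = s.card * ENNReal.ofReal (2 * ρ) := by simp [Real.volume_ball]

theorem Polynomial.volume_sublevel_le {p : ℝ[X]} {n : ℕ} (hn : n ≠ 0) (hp : p.natDegree ≤ n)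
    {a b v₀ c δ : ℝ} (hv₀ : v₀ ∈ Icc a b) (hc : 0 < c) (hcp : c ≤ |p.eval v₀|) (hδ : 0 < δ) :
    volume {v | v ∈ Icc a b ∧ |p.eval v| ≤ δ} ≤
      ENNReal.ofReal (4 * n * (b - a) * (δ / c) ^ (1 / n : ℝ)) := by
  have htn : ((δ / c) ^ (1 / n : ℝ)) ^ n = δ / c := by
    simpa only [one_div] using Real.rpow_inv_natCast_pow (x := δ / c) (by positivity) hn
  set t := (δ / c) ^ (1 / n : ℝ)
  have ht₀ : 0 < t := by positivity
  have hab : 0 ≤ b - a := by linarith [hv₀.1, hv₀.2]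
  have hn1 : (1 : ℝ) ≤ n := by exact_mod_cast Nat.one_le_iff_ne_zero.2 hn
  rcases lt_or_ge t (1 / 2) with ht | ht
  · have hδt : δ ≤ t ^ n * |p.eval v₀| := by
      rw [htn]
      calc δ = δ / c * c := (div_mul_cancel₀ _ hc.ne').symm
        _ ≤ δ / c * |p.eval v₀| := by gcongr
    have hcover : {v | v ∈ Icc a b ∧ |p.eval v| ≤ δ} ⊆
        ⋃ r ∈ (p.map (algebraMap ℝ ℂ)).roots.toFinset, Metric.ball r.re (2 * (b - a) * t) := by
      rintro v ⟨hv, hpv⟩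
      have hvv₀ : |v - v₀| ≤ b - a := abs_sub_le_of_le_of_le hv.1 hv.2 hv₀.1 hv₀.2
      obtain ⟨r, hr, hrv⟩ := exists_root_near_of_abs_eval_le hn hp hvv₀ ht₀ ht
        (abs_pos.1 (hc.trans_le hcp)) hδt hpv
      exact mem_biUnion (Multiset.mem_toFinset.2 hr) hrv
    have hcard : (p.map (algebraMap ℝ ℂ)).roots.toFinset.card ≤ n :=
      (Multiset.toFinset_card_le _).trans <| (card_roots' _).trans <| (natDegree_map _).trans_le hp
    calc _ ≤ _ := measure_mono hcover
      _ ≤ _ := Real.volume_biUnion_ball_le _ _ _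
      _ ≤ n * ENNReal.ofReal (2 * (2 * (b - a) * t)) := by gcongr
      _ = _ := by rw [← ENNReal.ofReal_natCast, ← ENNReal.ofReal_mul (by positivity)]; ring_nf
  · calc _ ≤ volume (Icc a b) := measure_mono fun v hv => hv.1
      _ = ENNReal.ofReal (b - a) := Real.volume_Icc
      _ ≤ _ := by
        have : 1 ≤ 4 * n * t := by nlinarith
        exact ENNReal.ofReal_le_ofReal (by nlinarith [mul_le_mul_of_nonneg_left this hab])

noncomputable def fluxSymbol (ℓ m : ℕ) (τ ξ₁ ξ₂ : ℝ) : ℝ[X] := C τ + C ξ₁ * X ^ ℓ + C ξ₂ * X ^ m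

section fluxSymbol

variable {ℓ m : ℕ} {τ ξ₁ ξ₂ : ℝ}

@[simp]
theorem eval_fluxSymbol (v : ℝ) :
    (fluxSymbol ℓ m τ ξ₁ ξ₂).eval v = τ + v ^ ℓ * ξ₁ + v ^ m * ξ₂ := by
  simp only [fluxSymbol, eval_add, eval_mul, eval_C, eval_pow, eval_X]
  ring

theorem natDegree_fluxSymbol_le : (fluxSymbol ℓ m τ ξ₁ ξ₂).natDegree ≤ max ℓ m := by
  unfold fluxSymbol
  compute_degree

theorem fluxSymbol_eq_zero_iff (hℓ : ℓ ≠ 0) (hm : m ≠ 0) (hne : ℓ ≠ m) :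
    fluxSymbol ℓ m τ ξ₁ ξ₂ = 0 ↔ τ = 0 ∧ ξ₁ = 0 ∧ ξ₂ = 0 := by
  refine ⟨fun h => ?_, fun ⟨h₀, h₁, h₂⟩ => by simp [fluxSymbol, h₀, h₁, h₂]⟩
  have h₀ := congrArg (coeff · 0) h
  have h₁ := congrArg (coeff · ℓ) h
  have h₂ := congrArg (coeff · m) h
  simp only [fluxSymbol, coeff_add, coeff_C, coeff_C_mul, coeff_X_pow, coeff_zero] at h₀ h₁ h₂
  simp_all [Ne.symm]

end fluxSymbol

theorem isCompact_sum_sq_eq_one :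
    IsCompact {p : ℝ × ℝ × ℝ | p.1 ^ 2 + p.2.1 ^ 2 + p.2.2 ^ 2 = 1} := by
  have hclosed : IsClosed {p : ℝ × ℝ × ℝ | p.1 ^ 2 + p.2.1 ^ 2 + p.2.2 ^ 2 = 1} :=
    isClosed_eq (by fun_prop) continuous_const
  refine (isCompact_Icc (a := -1) (b := 1)).of_isClosed_subset hclosed fun p hp => ?_
  have hp : p.1 ^ 2 + p.2.1 ^ 2 + p.2.2 ^ 2 = 1 := hp
  refine ⟨⟨?_, ?_, ?_⟩, ?_, ?_, ?_⟩ <;> dsimp <;>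
    nlinarith [sq_nonneg p.1, sq_nonneg p.2.1, sq_nonneg p.2.2]

theorem exists_pos_le_abs_eval_fluxSymbol {ℓ m : ℕ} (hℓ : ℓ ≠ 0) (hm : m ≠ 0) (hne : ℓ ≠ m)
    {M : ℝ} (hM : 0 < M) :
    ∃ c > 0, ∀ τ ξ₁ ξ₂ : ℝ, τ ^ 2 + ξ₁ ^ 2 + ξ₂ ^ 2 = 1 →
      ∃ v₀ ∈ Icc (-M) M, c ≤ |(fluxSymbol ℓ m τ ξ₁ ξ₂).eval v₀| := by
  set N := max ℓ m + 1
  set x : Fin N → ℝ := fun j => M / N * j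
  have hx_inj : x.Injective :=
    (mul_right_injective₀ (by positivity)).comp (Nat.cast_injective.comp Fin.val_injective)
  have hx_mem (j : Fin N) : x j ∈ Icc (-M) M := by
    have hj : (j : ℝ) ≤ N := by exact_mod_cast j.isLt.le
    have hMN : M / N * N = M := div_mul_cancel₀ _ (by positivity)
    constructor <;> simp only [x] <;> nlinarith [show 0 ≤ M / N by positivity]
  have hK0 : ∀ p ∈ {p : ℝ × ℝ × ℝ | p.1 ^ 2 + p.2.1 ^ 2 + p.2.2 ^ 2 = 1},
      ∃ j, (fluxSymbol ℓ m p.1 p.2.1 p.2.2).eval (x j) ≠ 0 := by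
    rintro ⟨τ, ξ₁, ξ₂⟩ hp
    by_contra! h0
    have := eq_zero_of_natDegree_lt_card_of_eval_eq_zero _ hx_inj h0
      (by rw [Fintype.card_fin]; exact natDegree_fluxSymbol_le.trans_lt (Nat.lt_succ_self _))
    obtain ⟨rfl, rfl, rfl⟩ := (fluxSymbol_eq_zero_iff hℓ hm hne).1 this
    norm_num at hp
  obtain ⟨c, hc, hcK⟩ := isCompact_sum_sq_eq_one.exists_pos_forall_exists_le_abs
    (fun j => by simp only [eval_fluxSymbol]; fun_prop) hK0
  refine ⟨c, hc, fun τ ξ₁ ξ₂ h => ?_⟩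
  obtain ⟨j, hj⟩ := hcK (τ, ξ₁, ξ₂) h
  exact ⟨x j, hx_mem j, hj⟩

/-- Non-degeneracy of order `α = min(1/ℓ, 1/m)` for the two-dimensional conservation law
with fluxes `ρ^{ℓ+1}/(ℓ+1)`, `ρ^{m+1}/(m+1)`, `ℓ ≠ m`. -/
theorem nondegeneracy_two_dim_flux (ℓ m : ℕ) (hℓ : 1 ≤ ℓ) (hm : 1 ≤ m) (hne : ℓ ≠ m)
    (M : ℝ) (hM : 0 < M) :
    ∃ C : ℝ, 0 < C ∧ ∀ τ ξ₁ ξ₂ δ : ℝ, τ ^ 2 + ξ₁ ^ 2 + ξ₂ ^ 2 = 1 → 0 < δ → δ ≤ 1 →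
      volume {v : ℝ | v ∈ Set.Icc (-M) M ∧ |τ + v ^ ℓ * ξ₁ + v ^ m * ξ₂| ≤ δ}
        ≤ ENNReal.ofReal (C * δ ^ (min (1 / (ℓ : ℝ)) (1 / (m : ℝ)))) := by
  obtain ⟨c, hc, hlarge⟩ := exists_pos_le_abs_eval_fluxSymbol (by omega) (by omega) hne hM
  have hα : min (1 / (ℓ : ℝ)) (1 / (m : ℝ)) = 1 / (max ℓ m : ℕ) := by
    rcases le_total ℓ m with h | h
    · rw [max_eq_right h, min_eq_right]
      gcongr
    · rw [max_eq_left h, min_eq_left]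
      gcongr
  refine ⟨8 * (max ℓ m : ℕ) * M / c ^ (1 / (max ℓ m : ℕ) : ℝ), by positivity,
    fun τ ξ₁ ξ₂ δ hunit hδ _ => ?_⟩
  obtain ⟨v₀, hv₀, hcv₀⟩ := hlarge τ ξ₁ ξ₂ hunit
  calc _ = volume {v | v ∈ Icc (-M) M ∧ |(fluxSymbol ℓ m τ ξ₁ ξ₂).eval v| ≤ δ} := by
        simp only [eval_fluxSymbol]
    _ ≤ _ := volume_sublevel_le (by omega) natDegree_fluxSymbol_le hv₀ hc hcv₀ hδ
    _ = _ := by rw [hα, Real.div_rpow hδ.le hc.le]; ring_nf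
end
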